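/- arXiv:1303.4243 — 2 statements merged into one kernel-verified Lean document; each statement's English description precedes it below -/
import Mathlib

section
/- Let N, d ≥ 1 and X = Fin N × Fin d, and let K := {a ∈ FreeAlgebra ℝ X : coeff_∅(a) = 0 and coeff_w(a) = 0 for every block word w}. If a ∈ K and b ∈ FreeAlgebra ℝ X satisfies coeff_∅(b) = 0, then the commutator a·b − b·a belongs to K, i.e. its empty-word coefficient vanishes and its coefficient on every block word vanishes. -/
/-- The coefficient of the word `w` in an element of the free algebra, with respect to the
basis of `FreeAlgebra ℝ X` indexed by `FreeMonoid X`. -/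
noncomputable def FreeAlgebra.coeffWord {X : Type} (a : FreeAlgebra ℝ X) (w : FreeMonoid X) : ℝ :=
  (FreeAlgebra.basisFreeMonoid ℝ X).repr a w

/-- A word is a block word if it is nonempty and all of its letters have the same
block index (first component). -/
def IsBlockWord {N d : ℕ} (w : FreeMonoid (Fin N × Fin d)) : Prop :=
  w ≠ 1 ∧ ∃ m : Fin N, ∀ l ∈ FreeMonoid.toList w, l.1 = m

/-!
The coefficient of `w` in `a * b` is `∑_{u v = w} coeff_u(a) coeff_v(b)`, so the elements whose
coefficients vanish on a set of words closed under taking prefixes and suffixes form a two-sided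
ideal. Every prefix and every suffix of a block word is empty or again a block word, so the
empty word together with the block words is such a set, and `K` is a two-sided ideal of the whole
free algebra. In particular it contains `a * b - b * a` as soon as it contains `a`.
-/

namespace FreeAlgebra

variable {X : Type}

theorem coeffWord_eq_coeff (a : FreeAlgebra ℝ X) (w : FreeMonoid X) :
    coeffWord a w = (equivMonoidAlgebraFreeMonoid (R := ℝ) (X := X) a).coeff w := by
  simp only [coeffWord, basisFreeMonoid, Module.Basis.map_repr, LinearEquiv.symm_symm,
    LinearEquiv.trans_apply, Finsupp.basisSingleOne_repr, LinearEquiv.refl_apply]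
  rfl

theorem coeffWord_mul_eq_zero {a b : FreeAlgebra ℝ X} {w : FreeMonoid X}
    (h : ∀ u v, u * v = w → coeffWord a u * coeffWord b v = 0) :
    coeffWord (a * b) w = 0 := by
  classical
  rw [coeffWord_eq_coeff, map_mul, MonoidAlgebra.coeff_mul, Finsupp.sum]
  refine Finset.sum_eq_zero fun u _ => ?_
  rw [Finsupp.sum]
  refine Finset.sum_eq_zero fun v _ => ?_
  split_ifs with huv
  · rw [← coeffWord_eq_coeff, ← coeffWord_eq_coeff]
    exact h u v huv
  · rfl

noncomputable def vanishingIdeal (S : Set (FreeMonoid X))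
    (hS : ∀ u v, u * v ∈ S → u ∈ S ∧ v ∈ S) : TwoSidedIdeal (FreeAlgebra ℝ X) :=
  .mk' {a | ∀ w ∈ S, coeffWord a w = 0}
    (fun w _ => by rw [coeffWord, map_zero, Finsupp.zero_apply])
    (fun ha hb w hw => by
      rw [coeffWord, map_add, Finsupp.add_apply, ← coeffWord, ← coeffWord, ha w hw, hb w hw,
        add_zero])
    (fun ha w hw => by rw [coeffWord, map_neg, Finsupp.neg_apply, ← coeffWord, ha w hw, neg_zero])
    (fun hb w hw => coeffWord_mul_eq_zero fun u v huv => by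
      rw [hb v (hS u v (huv ▸ hw)).2, mul_zero])
    (fun ha w hw => coeffWord_mul_eq_zero fun u v huv => by
      rw [ha u (hS u v (huv ▸ hw)).1, zero_mul])

theorem mem_vanishingIdeal {S : Set (FreeMonoid X)} {hS : ∀ u v, u * v ∈ S → u ∈ S ∧ v ∈ S}
    {a : FreeAlgebra ℝ X} : a ∈ vanishingIdeal S hS ↔ ∀ w ∈ S, coeffWord a w = 0 :=
  TwoSidedIdeal.mem_mk' ..

end FreeAlgebra

namespace IsBlockWord

variable {N d : ℕ} {u v : FreeMonoid (Fin N × Fin d)}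

theorem of_mul_left (h : IsBlockWord (u * v)) (hu : u ≠ 1) : IsBlockWord u := by
  obtain ⟨m, hm⟩ := h.2
  exact ⟨hu, m, fun l hl => hm l (FreeMonoid.mem_mul.2 (.inl hl))⟩

theorem of_mul_right (h : IsBlockWord (u * v)) (hv : v ≠ 1) : IsBlockWord v := by
  obtain ⟨m, hm⟩ := h.2
  exact ⟨hv, m, fun l hl => hm l (FreeMonoid.mem_mul.2 (.inr hl))⟩

end IsBlockWord

theorem eq_one_or_isBlockWord_of_mul {N d : ℕ} {u v : FreeMonoid (Fin N × Fin d)}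
    (h : u * v = 1 ∨ IsBlockWord (u * v)) :
    (u = 1 ∨ IsBlockWord u) ∧ (v = 1 ∨ IsBlockWord v) := by
  rcases h with h | h
  · have hlen := congrArg FreeMonoid.length h
    rw [FreeMonoid.length_mul, FreeMonoid.length_one, Nat.add_eq_zero_iff] at hlen
    exact ⟨.inl (FreeMonoid.length_eq_zero.1 hlen.1), .inl (FreeMonoid.length_eq_zero.1 hlen.2)⟩
  · exact ⟨(em (u = 1)).imp_right h.of_mul_left, (em (v = 1)).imp_right h.of_mul_right⟩

/-- The paper's `𝔨ⁿ(ℝ^{Nd})`. -/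
noncomputable def blockWordIdeal (N d : ℕ) : TwoSidedIdeal (FreeAlgebra ℝ (Fin N × Fin d)) :=
  FreeAlgebra.vanishingIdeal {w | w = 1 ∨ IsBlockWord w} fun _ _ => eq_one_or_isBlockWord_of_mul

theorem mem_blockWordIdeal {N d : ℕ} {a : FreeAlgebra ℝ (Fin N × Fin d)} :
    a ∈ blockWordIdeal N d ↔
      FreeAlgebra.coeffWord a 1 = 0 ∧ ∀ w, IsBlockWord w → FreeAlgebra.coeffWord a w = 0 := by
  simp only [blockWordIdeal, FreeAlgebra.mem_vanishingIdeal, Set.mem_ofPred_eq, or_imp,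
    forall_and, forall_eq]

theorem commutator_mem_blockWord_vanishing_set_general (N d : ℕ)
    (a b : FreeAlgebra ℝ (Fin N × Fin d))
    (ha_empty : FreeAlgebra.coeffWord a 1 = 0)
    (ha_block : ∀ w : FreeMonoid (Fin N × Fin d), IsBlockWord w → FreeAlgebra.coeffWord a w = 0) :
    FreeAlgebra.coeffWord (a * b - b * a) 1 = 0 ∧
      ∀ w : FreeMonoid (Fin N × Fin d), IsBlockWord w →
        FreeAlgebra.coeffWord (a * b - b * a) w = 0 := by
  have ha : a ∈ blockWordIdeal N d := mem_blockWordIdeal.2 ⟨ha_empty, ha_block⟩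
  exact mem_blockWordIdeal.1 <|
    TwoSidedIdeal.sub_mem _ (TwoSidedIdeal.mul_mem_right _ a b ha)
      (TwoSidedIdeal.mul_mem_left _ b a ha)

theorem commutator_mem_blockWord_vanishing_set (N d : ℕ) (hN : 1 ≤ N) (hd : 1 ≤ d)
    (a b : FreeAlgebra ℝ (Fin N × Fin d))
    (ha_empty : FreeAlgebra.coeffWord a 1 = 0)
    (ha_block : ∀ w : FreeMonoid (Fin N × Fin d), IsBlockWord w → FreeAlgebra.coeffWord a w = 0)
    (hb_empty : FreeAlgebra.coeffWord b 1 = 0) :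
    FreeAlgebra.coeffWord (a * b - b * a) 1 = 0 ∧
      ∀ w : FreeMonoid (Fin N × Fin d), IsBlockWord w →
        FreeAlgebra.coeffWord (a * b - b * a) w = 0 :=
  commutator_mem_blockWord_vanishing_set_general N d a b ha_empty ha_block
end

section
/- Let p ≥ 1 and α > 0, let (E,d) be a metric space and let x : [0,T] → E be a continuous path with ν_p(x; 0,T) < ∞; set ω_x(s,t) := ν_p(x; s,t). Then for every partition 0 = t₀ < t₁ < … < t_n = T, Σ_{i=1}^n d(x_{t_{i−1}}, x_{t_i})^p ≤ (N_{α,[0,T]}(ω_x) + 1)^{p−1} · M_{α,[0,T]}(ω_x), with the convention that the right-hand side is +∞ when N_{α,[0,T]}(ω_x) is infinite or M_{α,[0,T]}(ω_x) = ∞. -/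
open scoped ENNReal

/-- The `p`-variation functional of a path `x` on the interval `[s, t]`:
the supremum over all partitions `s = u₀ < u₁ < … < u_n = t` of
`∑ d(x_{u_{i-1}}, x_{u_i})^p`, valued in `[0, ∞]`. -/
noncomputable def pVar {E : Type*} [PseudoMetricSpace E] (p : ℝ) (x : ℝ → E) (s t : ℝ) : ℝ≥0∞ :=
  ⨆ (n : ℕ) (u : Fin (n + 1) → ℝ) (_ : StrictMono u) (_ : u 0 = s)
    (_ : u (Fin.last n) = t),
    ∑ i : Fin n, edist (x (u i.castSucc)) (x (u i.succ)) ^ p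

/-- The accumulated `α`-local `ω`-variation on `[0, T]`: the supremum over all partitions
`0 = t₀ < t₁ < … < t_n = T` with `ω (t_{i-1}, t_i) ≤ α` for every `i` of
`∑ ω (t_{i-1}, t_i)`. -/
noncomputable def accumLocalVar (ω : ℝ → ℝ → ℝ≥0∞) (α : ℝ≥0∞) (T : ℝ) : ℝ≥0∞ :=
  ⨆ (n : ℕ) (u : Fin (n + 1) → ℝ) (_ : StrictMono u) (_ : u 0 = 0)
    (_ : u (Fin.last n) = T) (_ : ∀ i : Fin n, ω (u i.castSucc) (u i.succ) ≤ α),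
    ∑ i : Fin n, ω (u i.castSucc) (u i.succ)

open scoped Classical in
/-- The greedy subdivision points: `σ₀ = 0` and
`σ_{i+1} = inf {t ∈ (σ_i, T] : ω (σ_i, t) ≥ α}`, with `σ_{i+1} = T` if no such `t` exists. -/
noncomputable def greedyPoints (ω : ℝ → ℝ → ℝ≥0∞) (α : ℝ≥0∞) (T : ℝ) : ℕ → ℝ
  | 0 => 0
  | n + 1 =>
    if ∃ t ∈ Set.Ioc (greedyPoints ω α T n) T, α ≤ ω (greedyPoints ω α T n) t then
      sInf {t | t ∈ Set.Ioc (greedyPoints ω α T n) T ∧ α ≤ ω (greedyPoints ω α T n) t}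
    else T

/-!
Refine each interval `[u_{i-1}, u_i]` of the partition by the greedy points `σ_1, …, σ_N` lying
inside it. Every piece of the refinement lies in a single greedy cell `[σ_j, σ_{j+1}]`, on which
`ω_x ≤ α`: `ω_x(σ_j, r) < α` for `r < σ_{j+1}` by the infimum defining `σ_{j+1}`, and `ω_x(σ_j, ·)`
is left-continuous because `x` is continuous. So the refined partition of `[0, T]` is `α`-admissible
and its `ω_x`-sum is at most `M`. On the other hand, by the triangle inequality and the power-mean
inequality, `d(x_{u_{i-1}}, x_{u_i})^p` is at most `(N + 1)^{p-1}` times the sum of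
`d^p ≤ ω_x` over the at most `N + 1` pieces of `[u_{i-1}, u_i]`.
-/

namespace List

variable {α M : Type*}

def chainSum [AddCommMonoid M] (f : α → α → M) : List α → M
  | a :: b :: l => f a b + chainSum f (b :: l)
  | _ => 0

section AddCommMonoid

variable [AddCommMonoid M] (f : α → α → M)

@[simp] theorem chainSum_nil : chainSum f [] = 0 := rfl

@[simp] theorem chainSum_singleton (a : α) : chainSum f [a] = 0 := rfl

@[simp] theorem chainSum_cons_cons (a b : α) (l : List α) :
    chainSum f (a :: b :: l) = f a b + chainSum f (b :: l) := rfl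

theorem chainSum_append_cons (l₁ : List α) (b : α) (l₂ : List α) :
    chainSum f (l₁ ++ b :: l₂) = chainSum f (l₁ ++ [b]) + chainSum f (b :: l₂) := by
  induction l₁ with
  | nil => simp
  | cons a l₁ ih =>
    cases l₁ with
    | nil => simp
    | cons c l₁ => simp only [cons_append, chainSum_cons_cons] at ih ⊢; rw [ih, add_assoc]

theorem chainSum_concat (l : List α) (b c : α) :
    chainSum f (l ++ [b, c]) = chainSum f (l ++ [b]) + f b c := by
  simpa using chainSum_append_cons f l b [c]

theorem chainSum_ofFn {n : ℕ} (u : Fin (n + 1) → α) :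
    chainSum f (ofFn u) = ∑ i : Fin n, f (u i.castSucc) (u i.succ) := by
  induction n with
  | zero => simp
  | succ n ih =>
    have htail : u (Fin.succ 0) :: ofFn (fun i => u i.succ.succ) = ofFn (fun i => u i.succ) :=
      (ofFn_succ (f := fun i => u i.succ)).symm
    rw [ofFn_succ, ofFn_succ, chainSum_cons_cons, htail, ih, Fin.sum_univ_succ]
    rfl

end AddCommMonoid

theorem chainSum_le_chainSum [AddCommMonoid M] [PartialOrder M] [IsOrderedAddMonoid M]
    {f g : α → α → M} : ∀ {l : List α}, l.IsChain (fun a b => f a b ≤ g a b) →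
      chainSum f l ≤ chainSum g l
  | [], _ | [_], _ => le_rfl
  | _ :: _ :: _, h => add_le_add (isChain_cons_cons.1 h).1
      (chainSum_le_chainSum (isChain_cons_cons.1 h).2)

theorem chainSum_const_mul [NonUnitalNonAssocSemiring M] (c : M) (f : α → α → M) :
    ∀ l : List α, chainSum (fun a b => c * f a b) l = c * chainSum f l
  | [] | [_] => by simp
  | a :: b :: l => by simp [chainSum_const_mul c f (b :: l), mul_add]

theorem exists_eq_ofFn : ∀ {l : List α}, l ≠ [] → ∃ (n : ℕ) (u : Fin (n + 1) → α), ofFn u = l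
  | a :: l, _ => ⟨l.length, (a :: l).get, ofFn_get _⟩

theorem head?_ofFn_succ {n : ℕ} (u : Fin (n + 1) → α) : (ofFn u).head? = some (u 0) := by
  simp [ofFn_succ]

theorem getLast?_ofFn_succ {n : ℕ} (u : Fin (n + 1) → α) :
    (ofFn u).getLast? = some (u (Fin.last n)) := by
  rw [getLast?_eq_some_getLast (by simp), getLast_ofFn]
  rfl

theorem isChain_ofFn_succ {n : ℕ} {u : Fin (n + 1) → α} {R : α → α → Prop} :
    (ofFn u).IsChain R ↔ ∀ i : Fin n, R (u i.castSucc) (u i.succ) := by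
  rw [isChain_ofFn, Fin.forall_iff]
  simp

theorem exists_refinement [AddCommMonoid M] [PartialOrder M] [IsOrderedAddMonoid M]
    {R : α → α → Prop} {f g : α → α → M} : ∀ {l : List α},
      l.IsChain (fun a b => ∃ L : List α, L.head? = some a ∧ L.getLast? = some b ∧
        L.IsChain R ∧ f a b ≤ chainSum g L) →
      ∃ L : List α, L.head? = l.head? ∧ L.getLast? = l.getLast? ∧ L.IsChain R ∧
        chainSum f l ≤ chainSum g L
  | [], _ => ⟨[], rfl, rfl, .nil, le_rfl⟩
  | [a], _ => ⟨[a], rfl, rfl, .singleton a, le_rfl⟩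
  | a :: b :: l, h => by
    rw [isChain_cons_cons] at h
    obtain ⟨L₀, h₀a, h₀b, h₀R, h₀f⟩ := h.1
    obtain ⟨L₁, h₁b, h₁l, h₁R, h₁f⟩ := exists_refinement h.2
    obtain ⟨L₀, rfl⟩ : ∃ L₀', L₀ = L₀' ++ [b] := ⟨_, (dropLast_append_getLast? b h₀b).symm⟩
    obtain ⟨L₁, rfl⟩ : ∃ L₁', L₁ = b :: L₁' := by
      cases L₁ with
      | nil => simp at h₁b
      | cons c L₁ => exact ⟨L₁, by simp_all⟩
    refine ⟨L₀ ++ b :: L₁, ?_, ?_, ?_, ?_⟩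
    · simpa using h₀a
    · rw [getLast?_append_cons, h₁l, getLast?_cons_cons]
    · simpa using h₀R.append_overlap (l₂ := [b]) h₁R (cons_ne_nil b [])
    · rw [chainSum_cons_cons, chainSum_append_cons]
      exact add_le_add h₀f h₁f

theorem edist_le_chainSum {E : Type*} [PseudoEMetricSpace E] (x : α → E) :
    ∀ {l : List α} {a b : α}, l.head? = some a → l.getLast? = some b →
      edist (x a) (x b) ≤ chainSum (fun c d => edist (x c) (x d)) l
  | [], _, _, ha, _ => by simp at ha
  | [c], a, b, ha, hb => by simp_all
  | c :: d :: l, a, b, ha, hb => by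
    obtain rfl : c = a := by simpa using ha
    rw [getLast?_cons_cons] at hb
    calc edist (x c) (x b) ≤ edist (x c) (x d) + edist (x d) (x b) := edist_triangle _ _ _
      _ ≤ _ := add_le_add le_rfl (edist_le_chainSum x rfl hb)

theorem chainSum_rpow_le {p : ℝ} (hp : 1 ≤ p) (g : α → α → ℝ≥0∞) (l : List α) :
    chainSum g l ^ p ≤
      ((l.length - 1 : ℕ) : ℝ≥0∞) ^ (p - 1) * chainSum (fun a b => g a b ^ p) l := by
  rcases eq_or_ne l [] with rfl | hl
  · simp [ENNReal.zero_rpow_of_pos (by linarith : (0 : ℝ) < p)]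
  obtain ⟨n, u, rfl⟩ := exists_eq_ofFn hl
  rw [chainSum_ofFn, chainSum_ofFn]
  simpa using ENNReal.rpow_sum_le_const_mul_sum_rpow (s := Finset.univ)
    (f := fun i : Fin n => g (u i.castSucc) (u i.succ)) hp

theorem SortedLT.isChain_notMem_Ioo [Preorder α] {l : List α} (hl : l.SortedLT) :
    l.IsChain (fun a b => a < b ∧ ∀ c ∈ l, c ∉ Set.Ioo a b) := by
  rw [isChain_iff_getElem]
  refine fun i hi => ⟨hl.strictMono_get (Fin.mk_lt_mk.2 i.lt_add_one), ?_⟩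
  rintro c hc ⟨h₁, h₂⟩
  obtain ⟨j, hj, rfl⟩ := getElem_of_mem hc
  have h₁ := (hl.strictMono_get.lt_iff_lt (a := ⟨i, by omega⟩) (b := ⟨j, hj⟩)).1 h₁
  have h₂ := (hl.strictMono_get.lt_iff_lt (a := ⟨j, hj⟩) (b := ⟨i + 1, hi⟩)).1 h₂
  simp only [Fin.mk_lt_mk] at h₁ h₂
  omega

theorem isChain_lt_ofFn_iff [Preorder α] {n : ℕ} {u : Fin n → α} :
    (ofFn u).IsChain (· < ·) ↔ StrictMono u :=
  sortedLT_iff_isChain.symm.trans sortedLT_ofFn_iff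

end List

theorem Finset.sortedLT_cons_sort_append {α : Type*} [LinearOrder α] {s : Finset α} {a b : α}
    (hab : a < b) (hs : ∀ e ∈ s, e ∈ Set.Ioo a b) : (a :: s.sort ++ [b]).SortedLT := by
  have hs' : ∀ e ∈ s.sort, e ∈ Set.Ioo a b := fun e he => hs e (mem_sort _ |>.1 he)
  refine List.sortedLT_iff_pairwise.2 <| List.pairwise_append.2
    ⟨List.pairwise_cons.2 ⟨fun e he => (hs' e he).1, (sortedLT_sort s).pairwise⟩,
      List.pairwise_singleton _ _, fun e he f hf => ?_⟩
  rw [List.mem_singleton.1 hf]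
  rcases List.mem_cons.1 he with rfl | he
  exacts [hab, (hs' e he).2]

section pVar

open List Filter Topology

variable {E : Type*} [PseudoMetricSpace E] (p : ℝ) (x : ℝ → E) {s t : ℝ}

theorem chainSum_le_pVar {l : List ℝ} (hl : l.IsChain (· < ·)) (hs : l.head? = some s)
    (ht : l.getLast? = some t) : l.chainSum (fun a b => edist (x a) (x b) ^ p) ≤ pVar p x s t := by
  obtain ⟨n, u, rfl⟩ := exists_eq_ofFn (l := l) (by rintro rfl; simp at hs)
  rw [head?_ofFn_succ, Option.some_inj] at hs
  rw [getLast?_ofFn_succ, Option.some_inj] at ht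
  rw [chainSum_ofFn]
  exact le_iSup₂_of_le n u <| le_iSup₂_of_le (isChain_lt_ofFn_iff.1 hl) hs <|
    le_iSup_of_le ht le_rfl

theorem pVar_le {c : ℝ≥0∞} (h : ∀ l : List ℝ, l.IsChain (· < ·) → l.head? = some s →
      l.getLast? = some t → l.chainSum (fun a b => edist (x a) (x b) ^ p) ≤ c) :
    pVar p x s t ≤ c := by
  refine iSup_le fun n => iSup₂_le fun u hu => iSup₂_le fun hs ht => ?_
  rw [← chainSum_ofFn (fun a b => edist (x a) (x b) ^ p)]
  exact h _ (isChain_lt_ofFn_iff.2 hu) (by rw [head?_ofFn_succ, hs])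
    (by rw [getLast?_ofFn_succ, ht])

theorem edist_rpow_le_pVar (hst : s < t) : edist (x s) (x t) ^ p ≤ pVar p x s t := by
  simpa using chainSum_le_pVar p x (l := [s, t]) (isChain_pair.2 hst) rfl rfl

theorem pVar_anti_left {s' : ℝ} (hs : s' ≤ s) : pVar p x s t ≤ pVar p x s' t := by
  refine pVar_le p x fun l hl hl₀ hl₁ => ?_
  rcases hs.eq_or_lt with rfl | hs
  · exact chainSum_le_pVar p x hl hl₀ hl₁
  obtain ⟨l, rfl⟩ : ∃ l', l = s :: l' := ⟨l.tail, (eq_cons_of_mem_head? hl₀)⟩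
  calc chainSum _ (s :: l) ≤ chainSum _ (s' :: s :: l) := le_add_self
    _ ≤ pVar p x s' t := chainSum_le_pVar p x (isChain_cons_cons.2 ⟨hs, hl⟩) rfl
      (by rwa [getLast?_cons_cons])

theorem pVar_mono_right {t' : ℝ} (ht : t ≤ t') : pVar p x s t ≤ pVar p x s t' := by
  refine pVar_le p x fun l hl hl₀ hl₁ => ?_
  rcases ht.eq_or_lt with rfl | ht
  · exact chainSum_le_pVar p x hl hl₀ hl₁
  obtain ⟨l, rfl⟩ : ∃ l', l = l' ++ [t] := ⟨_, (dropLast_append_getLast? t hl₁).symm⟩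
  calc chainSum _ (l ++ [t]) ≤ chainSum _ (l ++ [t, t']) := by
        rw [chainSum_concat]; exact le_self_add
    _ ≤ pVar p x s t' := chainSum_le_pVar p x (isChain_split.2 ⟨hl, isChain_pair.2 ht⟩)
      (by simpa using hl₀) (by simp)

theorem pVar_mono {s' t' : ℝ} (hs : s' ≤ s) (ht : t ≤ t') : pVar p x s t ≤ pVar p x s' t' :=
  (pVar_anti_left p x hs).trans (pVar_mono_right p x ht)

/-- The sum of a partition `s = l₀ < ⋯ < l_k = t` is the limit, as `r ↑ t`, of the sums of the
partitions `l₀ < ⋯ < l_{k-1} < r` of `[s, r]`, since `x` is left-continuous at `t`. -/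
theorem pVar_le_of_forall_lt {c : ℝ≥0∞} (hx : ContinuousWithinAt x (Set.Ioo s t) t)
    (h : ∀ r ∈ Set.Ioo s t, pVar p x s r ≤ c) : pVar p x s t ≤ c := by
  refine pVar_le p x fun l hl hl₀ hl₁ => ?_
  obtain ⟨l, rfl⟩ : ∃ l', l = l' ++ [t] := ⟨_, (dropLast_append_getLast? t hl₁).symm⟩
  rcases eq_nil_or_concat l with rfl | ⟨l, a, rfl⟩
  · simp
  rw [concat_eq_append, append_assoc, singleton_append] at hl hl₀ ⊢
  obtain ⟨hla, hat⟩ := isChain_split.1 hl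
  have hat : a < t := isChain_pair.1 hat
  have hsa : s ≤ a := hla.concat_induction_head (s ≤ ·) l
    (by rw [← Option.some_inj, ← head?_eq_some_head, ← hl₀]; simp)
    (fun _ _ hxy hx => hx.trans hxy.le) le_rfl
  set f := fun a b => edist (x a) (x b) ^ p
  have hbound : ∀ r ∈ Set.Ioo a t, chainSum f (l ++ [a]) + f a r ≤ c := fun r hr =>
    calc chainSum f (l ++ [a]) + f a r = chainSum f (l ++ [a, r]) := (chainSum_concat ..).symm
      _ ≤ pVar p x s r := chainSum_le_pVar p x (isChain_split.2 ⟨hla, isChain_pair.2 hr.1⟩)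
          (by simpa using hl₀) (by simp)
      _ ≤ c := h r ⟨hsa.trans_lt hr.1, hr.2⟩
  have hlim : Tendsto (fun r => chainSum f (l ++ [a]) + f a r) (𝓝[Set.Ioo a t] t)
      (𝓝 (chainSum f (l ++ [a]) + f a t)) :=
    tendsto_const_nhds.add <| (ENNReal.continuous_rpow_const.tendsto _).comp <|
      tendsto_const_nhds.edist (hx.mono (Set.Ioo_subset_Ioo_left hsa))
  have := right_nhdsWithin_Ioo_neBot hat
  rw [chainSum_concat]
  exact le_of_tendsto hlim (eventually_nhdsWithin_of_forall hbound)

end pVar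

theorem chainSum_le_accumLocalVar (ω : ℝ → ℝ → ℝ≥0∞) (α : ℝ≥0∞) {T : ℝ} {l : List ℝ}
    (hl : l.IsChain (fun a b => a < b ∧ ω a b ≤ α)) (h₀ : l.head? = some 0)
    (hT : l.getLast? = some T) : l.chainSum ω ≤ accumLocalVar ω α T := by
  obtain ⟨n, u, rfl⟩ := List.exists_eq_ofFn (l := l) (by rintro rfl; simp at h₀)
  rw [List.head?_ofFn_succ, Option.some_inj] at h₀
  rw [List.getLast?_ofFn_succ, Option.some_inj] at hT
  rw [List.isChain_ofFn_succ] at hl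
  rw [List.chainSum_ofFn]
  exact le_iSup₂_of_le n u <| le_iSup₂_of_le (Fin.strictMono_iff_lt_succ.2 fun i => (hl i).1) h₀ <|
    le_iSup₂_of_le hT (fun i => (hl i).2) le_rfl

section greedyPoints

variable (ω : ℝ → ℝ → ℝ≥0∞) (α : ℝ≥0∞) {T : ℝ}

open scoped Classical in
theorem greedyPoints_succ (m : ℕ) :
    greedyPoints ω α T (m + 1) =
      if ∃ t ∈ Set.Ioc (greedyPoints ω α T m) T, α ≤ ω (greedyPoints ω α T m) t then
        sInf {t | t ∈ Set.Ioc (greedyPoints ω α T m) T ∧ α ≤ ω (greedyPoints ω α T m) t}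
      else T := by
  rw [greedyPoints]

theorem greedyPoints_le (hT : 0 ≤ T) : ∀ m, greedyPoints ω α T m ≤ T
  | 0 => hT
  | m + 1 => by
    rw [greedyPoints_succ]
    split_ifs with h
    · obtain ⟨t, ht, hαt⟩ := h
      exact (csInf_le ⟨_, fun _ hr => hr.1.1.le⟩ (by exact ⟨ht, hαt⟩)).trans ht.2
    · exact le_rfl

theorem greedyPoints_le_succ (hT : 0 ≤ T) (m : ℕ) :
    greedyPoints ω α T m ≤ greedyPoints ω α T (m + 1) := by
  rw [greedyPoints_succ]
  split_ifs with h
  · obtain ⟨t, ht, hαt⟩ := h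
    exact le_csInf ⟨t, ht, hαt⟩ fun _ hr => hr.1.1.le
  · exact greedyPoints_le ω α hT m

theorem greedyPoints_mono (hT : 0 ≤ T) : Monotone (greedyPoints ω α T) :=
  monotone_nat_of_le_succ (greedyPoints_le_succ ω α hT)

theorem lt_of_mem_Ioo_greedyPoints (hT : 0 ≤ T) {m : ℕ} {r : ℝ}
    (hr : r ∈ Set.Ioo (greedyPoints ω α T m) (greedyPoints ω α T (m + 1))) :
    ω (greedyPoints ω α T m) r < α := by
  have hrT : r ≤ T := hr.2.le.trans (greedyPoints_le ω α hT _)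
  by_contra! hαr
  have hr₂ := hr.2
  rw [greedyPoints_succ, if_pos ⟨r, ⟨hr.1, hrT⟩, hαr⟩] at hr₂
  exact hr₂.not_ge (csInf_le ⟨_, fun _ hr => hr.1.1.le⟩ ⟨⟨hr.1, hrT⟩, hαr⟩)

end greedyPoints

section greedyCells

variable {E : Type*} [PseudoMetricSpace E] (p : ℝ) (x : ℝ → E) (α : ℝ≥0∞) {T : ℝ}

theorem pVar_greedyPoints_succ_le (hT : 0 ≤ T) (hx : ContinuousOn x (Set.Icc 0 T)) (m : ℕ) :
    pVar p x (greedyPoints (pVar p x) α T m) (greedyPoints (pVar p x) α T (m + 1)) ≤ α := by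
  have h₀ : 0 ≤ greedyPoints (pVar p x) α T m := greedyPoints_mono _ α hT m.zero_le
  have h₁ := greedyPoints_le (pVar p x) α hT (m + 1)
  refine pVar_le_of_forall_lt p x ?_ fun r hr => (lt_of_mem_Ioo_greedyPoints _ α hT hr).le
  exact (hx.continuousWithinAt ⟨greedyPoints_mono _ α hT (m + 1).zero_le, h₁⟩).mono
    fun r hr => ⟨h₀.trans hr.1.le, hr.2.le.trans h₁⟩

/-- `[c, d]` lies in the greedy cell `[σ_j, σ_{j+1}]`, where `j + 1` is the first index with
`c < σ_{j+1}`. -/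
theorem pVar_le_of_forall_greedyPoints_notMem (hx : ContinuousOn x (Set.Icc 0 T))
    (hN : BddAbove {m | greedyPoints (pVar p x) α T m < T}) {c d : ℝ} (hc : 0 ≤ c) (hcd : c < d)
    (hdT : d ≤ T) (hfree : ∀ m, greedyPoints (pVar p x) α T m ∉ Set.Ioo c d) :
    pVar p x c d ≤ α := by
  classical
  have hex : ∃ m, c < greedyPoints (pVar p x) α T m := by
    obtain ⟨B, hB⟩ := hN
    refine ⟨B + 1, hcd.trans_le (hdT.trans (not_lt.1 fun h => ?_))⟩
    have := hB h
    omega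
  obtain ⟨j, hj⟩ := Nat.exists_eq_succ_of_ne_zero ((Nat.find_eq_zero hex).not.2 (not_lt.2 hc))
  have hjc : greedyPoints (pVar p x) α T j ≤ c := not_lt.1 (Nat.find_min hex (by omega))
  have hcj : c < greedyPoints (pVar p x) α T (j + 1) := by
    have := Nat.find_spec hex
    rwa [hj] at this
  have hdj : d ≤ greedyPoints (pVar p x) α T (j + 1) := not_lt.1 fun h => hfree _ ⟨hcj, h⟩
  exact (pVar_mono p x hjc hdj).trans (pVar_greedyPoints_succ_le p x α (by linarith) hx j)

theorem exists_greedy_partition (hx : ContinuousOn x (Set.Icc 0 T))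
    (hN : BddAbove {m | greedyPoints (pVar p x) α T m < T}) {a b : ℝ} (ha : 0 ≤ a) (hab : a < b)
    (hbT : b ≤ T) :
    ∃ L : List ℝ, L.head? = some a ∧ L.getLast? = some b ∧
      L.IsChain (fun c d => c < d ∧ pVar p x c d ≤ α) ∧
      L.length ≤ sSup {m | greedyPoints (pVar p x) α T m < T} + 2 := by
  classical
  set σ := greedyPoints (pVar p x) α T
  set W := ((Finset.Icc 1 (sSup {m | σ m < T})).image σ).filter (· ∈ Set.Ioo a b)
  set L := a :: W.sort ++ [b]
  have hW : ∀ e ∈ W, e ∈ Set.Ioo a b := fun e he => (Finset.mem_filter.1 he).2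
  have hmem : ∀ e ∈ L, a ≤ e ∧ e ≤ b := by
    simp only [L, List.mem_append, List.mem_cons, Finset.mem_sort, List.not_mem_nil, or_false]
    rintro e ((rfl | he) | rfl)
    exacts [⟨le_rfl, hab.le⟩, ⟨(hW e he).1.le, (hW e he).2.le⟩, ⟨hab.le, le_rfl⟩]
  have hsorted : L.SortedLT := Finset.sortedLT_cons_sort_append hab hW
  refine ⟨L, rfl, List.getLast?_concat, hsorted.isChain_notMem_Ioo.imp_of_mem_imp ?_, ?_⟩
  · rintro c d hc hd ⟨hcd, hfree⟩
    refine ⟨hcd, pVar_le_of_forall_greedyPoints_notMem p x α hx hN (ha.trans (hmem c hc).1) hcd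
      ((hmem d hd).2.trans hbT) fun m hm => hfree _ ?_ hm⟩
    have hmab : σ m ∈ Set.Ioo a b :=
      ⟨(hmem c hc).1.trans_lt hm.1, hm.2.trans_le (hmem d hd).2⟩
    have hm₀ : m ≠ 0 := by
      rintro rfl
      exact (ha.trans_lt hmab.1).ne rfl
    have hmN : m ≤ sSup {m | σ m < T} := le_csSup hN (hmab.2.trans_le hbT)
    refine List.mem_append_left _ (List.mem_cons_of_mem _ (Finset.mem_sort _ |>.2 ?_))
    exact Finset.mem_filter.2 ⟨Finset.mem_image_of_mem _ (Finset.mem_Icc.2 ⟨by omega, hmN⟩), hmab⟩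
  · simp only [L, List.length_append, List.length_cons, List.length_nil, Finset.length_sort]
    have hW : W.card ≤ sSup {m | σ m < T} :=
      (Finset.card_filter_le _ _).trans (Finset.card_image_le.trans (by simp))
    omega

theorem exists_greedy_partition_edist_rpow_le (hp : 1 ≤ p) (hx : ContinuousOn x (Set.Icc 0 T))
    (hN : BddAbove {m | greedyPoints (pVar p x) α T m < T}) {a b : ℝ} (ha : 0 ≤ a) (hab : a < b)
    (hbT : b ≤ T) :
    ∃ L : List ℝ, L.head? = some a ∧ L.getLast? = some b ∧
      L.IsChain (fun c d => c < d ∧ pVar p x c d ≤ α) ∧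
      edist (x a) (x b) ^ p ≤
        ((sSup {m | greedyPoints (pVar p x) α T m < T} : ℕ) + 1 : ℝ≥0∞) ^ (p - 1) *
          L.chainSum (pVar p x) := by
  obtain ⟨L, hLa, hLb, hL, hlen⟩ := exists_greedy_partition p x α hx hN ha hab hbT
  refine ⟨L, hLa, hLb, hL, ?_⟩
  calc edist (x a) (x b) ^ p ≤ L.chainSum (fun c d => edist (x c) (x d)) ^ p :=
        ENNReal.rpow_le_rpow (List.edist_le_chainSum x hLa hLb) (by linarith)
    _ ≤ ((L.length - 1 : ℕ) : ℝ≥0∞) ^ (p - 1) *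
          L.chainSum (fun c d => edist (x c) (x d) ^ p) := List.chainSum_rpow_le hp _ _
    _ ≤ _ := by
      have hK : ((L.length - 1 : ℕ) : ℝ≥0∞) ≤
          (sSup {m | greedyPoints (pVar p x) α T m < T} : ℕ) + 1 := by
        exact_mod_cast (by omega)
      gcongr
      exact List.chainSum_le_chainSum (hL.imp fun c d h => edist_rpow_le_pVar p x h.1)

end greedyCells

open scoped Classical in
theorem partition_sum_le_greedy_bound_general {E : Type*} [MetricSpace E] (p α T : ℝ)
    (hp : 1 ≤ p) (x : ℝ → E)
    (hx : ContinuousOn x (Set.Icc 0 T))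
    (n : ℕ) (u : Fin (n + 1) → ℝ) (hu : StrictMono u) (hu0 : u 0 = 0)
    (huT : u (Fin.last n) = T) :
    ∑ i : Fin n, edist (x (u i.castSucc)) (x (u i.succ)) ^ p ≤
      (if BddAbove {m : ℕ |
            greedyPoints (fun s t => pVar p x s t) (ENNReal.ofReal α) T m < T} then
        ((sSup {m : ℕ |
            greedyPoints (fun s t => pVar p x s t) (ENNReal.ofReal α) T m < T} : ℕ) + 1 :
              ℝ≥0∞) ^ (p - 1) *
          accumLocalVar (fun s t => pVar p x s t) (ENNReal.ofReal α) T
      else ∞) := by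
  split_ifs with hN
  swap
  · exact le_top
  set K := ((sSup {m : ℕ | greedyPoints (pVar p x) (ENNReal.ofReal α) T m < T} : ℕ) + 1 :
    ℝ≥0∞) ^ (p - 1)
  have hpieces : (List.ofFn u).IsChain fun a b => ∃ L : List ℝ, L.head? = some a ∧
      L.getLast? = some b ∧ L.IsChain (fun c d => c < d ∧ pVar p x c d ≤ ENNReal.ofReal α) ∧
      edist (x a) (x b) ^ p ≤ L.chainSum (fun c d => K * pVar p x c d) := by
    simp_rw [List.isChain_ofFn_succ, List.chainSum_const_mul]
    intro i
    exact exists_greedy_partition_edist_rpow_le p x _ hp hx hN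
      (hu0 ▸ hu.monotone (Fin.zero_le _)) (hu Fin.castSucc_lt_succ)
      (huT ▸ hu.monotone (Fin.le_last _))
  obtain ⟨L, hL₀, hLT, hL, hsum⟩ := List.exists_refinement hpieces
  rw [List.head?_ofFn_succ, hu0] at hL₀
  rw [List.getLast?_ofFn_succ, huT] at hLT
  calc ∑ i : Fin n, edist (x (u i.castSucc)) (x (u i.succ)) ^ p
      = (List.ofFn u).chainSum (fun a b => edist (x a) (x b) ^ p) := by
        rw [List.chainSum_ofFn]
    _ ≤ L.chainSum (fun c d => K * pVar p x c d) := hsum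
    _ = K * L.chainSum (pVar p x) := List.chainSum_const_mul _ _ _
    _ ≤ K * accumLocalVar (pVar p x) (ENNReal.ofReal α) T := by
      gcongr
      exact chainSum_le_accumLocalVar _ _ hL hL₀ hLT

open scoped Classical in
theorem partition_sum_le_greedy_bound {E : Type*} [MetricSpace E] (p α T : ℝ)
    (hp : 1 ≤ p) (hα : 0 < α) (hT : 0 ≤ T) (x : ℝ → E)
    (hx : ContinuousOn x (Set.Icc 0 T)) (hfin : pVar p x 0 T < ∞)
    (n : ℕ) (u : Fin (n + 1) → ℝ) (hu : StrictMono u) (hu0 : u 0 = 0)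
    (huT : u (Fin.last n) = T) :
    ∑ i : Fin n, edist (x (u i.castSucc)) (x (u i.succ)) ^ p ≤
      (if BddAbove {m : ℕ |
            greedyPoints (fun s t => pVar p x s t) (ENNReal.ofReal α) T m < T} then
        ((sSup {m : ℕ |
            greedyPoints (fun s t => pVar p x s t) (ENNReal.ofReal α) T m < T} : ℕ) + 1 :
              ℝ≥0∞) ^ (p - 1) *
          accumLocalVar (fun s t => pVar p x s t) (ENNReal.ofReal α) T
      else ∞) :=
  partition_sum_le_greedy_bound_general p α T hp x hx n u hu hu0 huT
end
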